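/- (Independence step in the proof of Lemma 3.1). Let Y : Ω → ℝ be integrable, let A : Ω → α and W : Ω → β be measurable maps into measurable spaces, and suppose W is independent of the pair (A, Y). Then for any measurable map ψ : α × β → γ into a measurable space, 𝔼[Y | σ(A, ψ(A, W))] = 𝔼[Y | σ(A)] almost surely; in particular, conditioning additionally on any measurable function of (A, W) does not change the conditional expectation of Y given A. -/

import Mathlib

/-!
Write `𝒜 = σ(A)` and `𝒲 = σ(W)`. Since `𝒜 ≤ σ(A, ψ(A, W)) ≤ 𝒜 ⊔ 𝒲`, the tower property reduces
the claim to `𝔼[Y | 𝒜 ⊔ 𝒲] = 𝔼[Y | 𝒜]`. For `s ∈ 𝒜` and `t ∈ 𝒲`, independence of `𝒲` from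
`σ(A, Y)` gives `∫_{s ∩ t} g = μ(t) ∫_s g` both for `g = Y` and for `g = 𝔼[Y | 𝒜]`, so the two
functions have the same integrals over the π-system of such intersections, which generates
`𝒜 ⊔ 𝒲`.
-/

open MeasureTheory ProbabilityTheory

namespace MeasurableSpace

variable {Ω : Type*}

theorem isPiSystem_image2_inter (m₁ m₂ : MeasurableSpace Ω) :
    IsPiSystem (Set.image2 (· ∩ ·) {s | MeasurableSet[m₁] s} {t | MeasurableSet[m₂] t}) := by
  rintro _ ⟨s₁, hs₁, t₁, ht₁, rfl⟩ _ ⟨s₂, hs₂, t₂, ht₂, rfl⟩ -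
  exact ⟨s₁ ∩ s₂, hs₁.inter hs₂, t₁ ∩ t₂, ht₁.inter ht₂, Set.inter_inter_inter_comm _ _ _ _⟩

theorem generateFrom_image2_inter (m₁ m₂ : MeasurableSpace Ω) :
    generateFrom (Set.image2 (· ∩ ·) {s | MeasurableSet[m₁] s} {t | MeasurableSet[m₂] t}) =
      m₁ ⊔ m₂ := by
  refine le_antisymm (generateFrom_le ?_) (sup_le ?_ ?_)
  · rintro _ ⟨s, hs, t, ht, rfl⟩
    exact (le_sup_left (a := m₁) s hs).inter (le_sup_right (a := m₁) t ht)
  · intro s hs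
    exact measurableSet_generateFrom ⟨s, hs, Set.univ, MeasurableSet.univ, Set.inter_univ s⟩
  · intro t ht
    exact measurableSet_generateFrom ⟨Set.univ, MeasurableSet.univ, t, ht, Set.univ_inter t⟩

end MeasurableSpace

namespace MeasureTheory

section

variable {α E : Type*} [NormedAddCommGroup E] [NormedSpace ℝ E]
  {m m₀ : MeasurableSpace α} {μ : Measure α} {s : Set (Set α)} {f g : α → E}

theorem setIntegral_eq_of_isPiSystem (hm : m ≤ m₀) (h_eq : m = MeasurableSpace.generateFrom s)
    (h_pi : IsPiSystem s) (hf : Integrable f μ) (hg : Integrable g μ)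
    (basic : ∀ t ∈ s, ∫ x in t, f x ∂μ = ∫ x in t, g x ∂μ)
    (h_univ : ∫ x, f x ∂μ = ∫ x, g x ∂μ) :
    ∀ t, MeasurableSet[m] t → ∫ x in t, f x ∂μ = ∫ x in t, g x ∂μ := by
  refine MeasurableSpace.induction_on_inter h_eq h_pi (by simp) basic ?_ ?_
  · intro t ht h
    rw [setIntegral_compl (hm t ht) hf, setIntegral_compl (hm t ht) hg, h, h_univ]
  · intro t htd htm h
    rw [integral_iUnion (fun i ↦ hm _ (htm i)) htd hf.integrableOn,
      integral_iUnion (fun i ↦ hm _ (htm i)) htd hg.integrableOn]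
    exact tsum_congr h

end

section

variable {Ω E : Type*} [NormedAddCommGroup E] [NormedSpace ℝ E] [CompleteSpace E]
  {m₁ m₂ m₃ mΩ : MeasurableSpace Ω} {μ : Measure Ω} [IsFiniteMeasure μ] {f : Ω → E}

theorem condExp_ae_eq_of_le_of_le (h₁₂ : m₁ ≤ m₂) (h₂₃ : m₂ ≤ m₃) (h₃ : m₃ ≤ mΩ)
    (h : μ[f | m₃] =ᵐ[μ] μ[f | m₁]) : μ[f | m₂] =ᵐ[μ] μ[f | m₁] :=
  calc μ[f | m₂]
      =ᵐ[μ] μ[μ[f | m₃] | m₂] := (condExp_condExp_of_le h₂₃ h₃).symm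
    _ =ᵐ[μ] μ[μ[f | m₁] | m₂] := condExp_congr_ae h
    _ = μ[f | m₁] :=
        condExp_of_stronglyMeasurable (h₂₃.trans h₃) (stronglyMeasurable_condExp.mono h₁₂)
          integrable_condExp

end

end MeasureTheory

namespace ProbabilityTheory

variable {Ω E : Type*} [NormedAddCommGroup E] [NormedSpace ℝ E] [CompleteSpace E]
  {m₁ m₂ m' mΩ : MeasurableSpace Ω} {μ : Measure Ω} [IsFiniteMeasure μ] {f : Ω → E}

theorem setIntegral_inter_eq_of_indep (hm₂ : m₂ ≤ mΩ) (hm' : m' ≤ mΩ) (hind : Indep m₂ m' μ)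
    (hf : StronglyMeasurable[m'] f) (hfint : Integrable f μ) {s t : Set Ω}
    (hs : MeasurableSet[m'] s) (ht : MeasurableSet[m₂] t) :
    ∫ x in s ∩ t, f x ∂μ = μ.real t • ∫ x in s, f x ∂μ := by
  have hcond : μ[s.indicator f | m₂] =ᵐ[μ] fun _ ↦ ∫ x, s.indicator f x ∂μ :=
    condExp_indep_eq hm' hm₂ (hf.indicator hs) hind.symm
  calc ∫ x in s ∩ t, f x ∂μ
      = ∫ x in t, s.indicator f x ∂μ := by
        rw [setIntegral_indicator (hm' s hs), Set.inter_comm]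
    _ = ∫ x in t, μ[s.indicator f | m₂] x ∂μ :=
        (setIntegral_condExp hm₂ (hfint.indicator (hm' s hs)) ht).symm
    _ = μ.real t • ∫ x in s, f x ∂μ := by
        rw [setIntegral_congr_ae (hm₂ t ht) (hcond.mono fun _ hx _ ↦ hx), setIntegral_const,
          integral_indicator (hm' s hs)]

theorem condExp_sup_eq_of_indep (h₁ : m₁ ≤ m') (hm₂ : m₂ ≤ mΩ) (hm' : m' ≤ mΩ)
    (hind : Indep m₂ m' μ) (hf : StronglyMeasurable[m'] f) (hfint : Integrable f μ) :
    μ[f | m₁ ⊔ m₂] =ᵐ[μ] μ[f | m₁] := by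
  have hsup : m₁ ⊔ m₂ ≤ mΩ := sup_le (h₁.trans hm') hm₂
  have hcond_m' : StronglyMeasurable[m'] (μ[f | m₁]) := stronglyMeasurable_condExp.mono h₁
  have h_inter : ∀ s, MeasurableSet[m₁] s → ∀ t, MeasurableSet[m₂] t →
      ∫ x in s ∩ t, μ[f | m₁] x ∂μ = ∫ x in s ∩ t, f x ∂μ := fun s hs t ht ↦ by
    rw [setIntegral_inter_eq_of_indep hm₂ hm' hind hcond_m' integrable_condExp (h₁ s hs) ht,
      setIntegral_inter_eq_of_indep hm₂ hm' hind hf hfint (h₁ s hs) ht,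
      setIntegral_condExp (h₁.trans hm') hfint hs]
  refine (ae_eq_condExp_of_forall_setIntegral_eq hsup hfint
    (fun _ _ _ ↦ integrable_condExp.integrableOn) (fun s hs _ ↦ ?_)
    (stronglyMeasurable_condExp.mono (le_sup_left : m₁ ≤ m₁ ⊔ m₂)).aestronglyMeasurable).symm
  refine setIntegral_eq_of_isPiSystem hsup (MeasurableSpace.generateFrom_image2_inter m₁ m₂).symm
    (MeasurableSpace.isPiSystem_image2_inter m₁ m₂) integrable_condExp hfint ?_
    (integral_condExp (h₁.trans hm')) s hs
  rintro _ ⟨s, hs, t, ht, rfl⟩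
  exact h_inter s hs t ht

end ProbabilityTheory

/-- **Independence step in the proof of Lemma 3.1.**
If `W` is independent of the pair `(A, Y)`, then for any measurable `ψ`,
conditioning on `(A, ψ(A, W))` gives the same conditional expectation of `Y`
as conditioning on `A` alone. -/
theorem condexp_eq_of_indep_pair
    {Ω : Type*} [MeasurableSpace Ω] (μ : Measure Ω) [IsProbabilityMeasure μ]
    {α β γ : Type*} [MeasurableSpace α] [MeasurableSpace β] [MeasurableSpace γ]
    (Y : Ω → ℝ) (hYmeas : Measurable Y) (hYint : Integrable Y μ)
    (A : Ω → α) (W : Ω → β) (hA : Measurable A) (hW : Measurable W)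
    (hindep : IndepFun W (fun ω => (A ω, Y ω)) μ)
    (ψ : α × β → γ) (hψ : Measurable ψ) :
    μ[Y | MeasurableSpace.comap (fun ω => (A ω, ψ (A ω, W ω))) inferInstance]
      =ᵐ[μ] μ[Y | MeasurableSpace.comap A inferInstance] := by
  have hA_le : MeasurableSpace.comap A inferInstance
      ≤ MeasurableSpace.comap (fun ω => (A ω, Y ω)) inferInstance :=
    (measurable_fst.comp (comap_measurable fun ω => (A ω, Y ω))).comap_le
  have hY : StronglyMeasurable[MeasurableSpace.comap (fun ω => (A ω, Y ω)) inferInstance] Y :=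
    (measurable_snd.comp (comap_measurable fun ω => (A ω, Y ω))).stronglyMeasurable
  have h_sup := condExp_sup_eq_of_indep hA_le hW.comap_le (hA.prodMk hYmeas).comap_le
    ((IndepFun_iff_Indep _ _ _).mp hindep) hY hYint
  refine condExp_ae_eq_of_le_of_le
    (measurable_fst.comp (comap_measurable fun ω => (A ω, ψ (A ω, W ω)))).comap_le ?_
    (sup_le hA.comap_le hW.comap_le) h_sup
  rw [← MeasurableSpace.comap_prodMk]
  exact ((measurable_fst.prodMk hψ).comp (comap_measurable fun ω => (A ω, W ω))).comap_le
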